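/- Let E be an (m+n)×(m+n) Hermitian matrix, Y ∈ ℂ^{p×(m+n)}, Z ∈ ℂ^{q×(m+n)}, and ζ > 0. If there exists ς ≥ 0 such that the block matrix [[E − ς·ZᴴZ, −ζ·Yᴴ], [−ζ·Y, ς·I_p]] is positive semidefinite, then E ⪰ YᴴXZ + ZᴴXᴴY for every X ∈ ℂ^{p×q} with ‖X‖_F ≤ ζ. -/

import Mathlib

/-!
Compress the LMI matrix `M` with `T = [1; ζ⁻¹ X Z]`: since `‖X‖_F ≤ ζ` gives `Xᴴ X ⪯ ζ² 1`,
the slack `ς Zᴴ (1 - ζ⁻² Xᴴ X) Z` is positive semidefinite, and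
`Tᴴ M T + ς Zᴴ (1 - ζ⁻² Xᴴ X) Z = E - (Yᴴ X Z + Zᴴ Xᴴ Y)`.
-/

open ComplexOrder Matrix

open scoped Matrix.Norms.Frobenius

lemma conjTranspose_fromRows_one_mul_fromBlocks_mul_fromRows_one {R m n : Type*}
    [Fintype m] [Fintype n] [Semiring R] [StarRing R] [DecidableEq m]
    (A : Matrix m m R) (B : Matrix m n R) (C : Matrix n m R) (D : Matrix n n R)
    (K : Matrix n m R) :
    (fromRows (1 : Matrix m m R) K)ᴴ * fromBlocks A B C D * fromRows (1 : Matrix m m R) K =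
      A + B * K + Kᴴ * C + Kᴴ * D * K := by
  rw [conjTranspose_fromRows_eq_fromCols_conjTranspose, conjTranspose_one, fromCols_mul_fromBlocks,
    fromCols_mul_fromRows]
  simp only [Matrix.one_mul, Matrix.mul_one, Matrix.add_mul]
  abel

lemma frobenius_norm_eq_sqrt {α m n : Type*} [Fintype m] [Fintype n] [SeminormedAddCommGroup α]
    (A : Matrix m n α) : ‖A‖ = √(∑ i, ∑ j, ‖A i j‖ ^ 2) := by
  simp [frobenius_norm_def, Real.sqrt_eq_rpow]

section RCLike

variable {𝕜 m n : Type*} [RCLike 𝕜] [Fintype m] [Fintype n]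

lemma norm_toLp_mulVec_le_frobenius_mul (X : Matrix m n 𝕜) (v : n → 𝕜) :
    ‖WithLp.toLp 2 (X *ᵥ v)‖ ≤ ‖X‖ * ‖WithLp.toLp 2 v‖ := by
  simpa [← replicateCol_mulVec, frobenius_norm_replicateCol] using
    frobenius_norm_mul X (replicateCol Unit v)

lemma star_dotProduct_self_eq_norm_sq (v : n → 𝕜) :
    star v ⬝ᵥ v = ((‖WithLp.toLp 2 v‖ ^ 2 : ℝ) : 𝕜) := by
  rw [EuclideanSpace.norm_eq, Real.sq_sqrt (by positivity)]
  simp [dotProduct, RCLike.conj_mul]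

lemma posSemidef_sq_smul_one_sub_conjTranspose_mul_self [DecidableEq n] (X : Matrix m n 𝕜)
    {c : ℝ} (hc : ‖X‖ ≤ c) : (c ^ 2 • (1 : Matrix n n 𝕜) - Xᴴ * X).PosSemidef := by
  refine posSemidef_iff_dotProduct_mulVec.mpr ⟨?_, fun v ↦ ?_⟩
  · simp [IsHermitian, conjTranspose_sub]
  have hform : star v ⬝ᵥ ((c ^ 2 • (1 : Matrix n n 𝕜) - Xᴴ * X) *ᵥ v) =
      ((c ^ 2 * ‖WithLp.toLp 2 v‖ ^ 2 - ‖WithLp.toLp 2 (X *ᵥ v)‖ ^ 2 : ℝ) : 𝕜) := by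
    rw [sub_mulVec, smul_mulVec, one_mulVec, ← mulVec_mulVec, dotProduct_sub, dotProduct_smul,
      dotProduct_mulVec, ← star_mulVec, star_dotProduct_self_eq_norm_sq,
      star_dotProduct_self_eq_norm_sq]
    simp [RCLike.real_smul_eq_coe_mul]
  rw [hform, RCLike.ofReal_nonneg, sub_nonneg, ← mul_pow]
  gcongr
  exact (norm_toLp_mulVec_le_frobenius_mul X v).trans (by gcongr)

end RCLike

theorem stmt16_general {d p q : ℕ} (E : Matrix (Fin d) (Fin d) ℂ)
    (Y : Matrix (Fin p) (Fin d) ℂ) (Z : Matrix (Fin q) (Fin d) ℂ)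
    (ζ ς : ℝ) (hζ : 0 < ζ) (hς : 0 ≤ ς)
    (hLMI : (Matrix.fromBlocks (E - ς • (Zᴴ * Z)) (-(ζ • Yᴴ)) (-(ζ • Y))
        (ς • (1 : Matrix (Fin p) (Fin p) ℂ))).PosSemidef) :
    ∀ X : Matrix (Fin p) (Fin q) ℂ,
      Real.sqrt (∑ i, ∑ j, ‖X i j‖ ^ 2) ≤ ζ →
        (E - (Yᴴ * X * Z + Zᴴ * Xᴴ * Y)).PosSemidef := by
  intro X hX
  rw [← frobenius_norm_eq_sqrt] at hX
  set K := ζ⁻¹ • (X * Z)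
  have hcompressed := hLMI.conjTranspose_mul_mul_same (fromRows 1 K)
  rw [conjTranspose_fromRows_one_mul_fromBlocks_mul_fromRows_one] at hcompressed
  have hslack := ((posSemidef_sq_smul_one_sub_conjTranspose_mul_self X hX)
    |>.conjTranspose_mul_mul_same Z).smul (show 0 ≤ ς * (ζ ^ 2)⁻¹ by positivity)
  convert hcompressed.add hslack using 1
  simp only [K, conjTranspose_smul, conjTranspose_mul, star_trivial, Matrix.mul_sub,
    Matrix.sub_mul, Matrix.mul_smul, Matrix.smul_mul, Matrix.neg_mul, Matrix.mul_neg,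
    Matrix.mul_one, smul_smul, smul_neg, Matrix.mul_assoc]
  match_scalars <;> field_simp <;> ring

theorem stmt16 {d p q : ℕ} (E : Matrix (Fin d) (Fin d) ℂ) (hE : E.IsHermitian)
    (Y : Matrix (Fin p) (Fin d) ℂ) (Z : Matrix (Fin q) (Fin d) ℂ)
    (ζ ς : ℝ) (hζ : 0 < ζ) (hς : 0 ≤ ς)
    (hLMI : (Matrix.fromBlocks (E - ς • (Zᴴ * Z)) (-(ζ • Yᴴ)) (-(ζ • Y))
        (ς • (1 : Matrix (Fin p) (Fin p) ℂ))).PosSemidef) :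
    ∀ X : Matrix (Fin p) (Fin q) ℂ,
      Real.sqrt (∑ i, ∑ j, ‖X i j‖ ^ 2) ≤ ζ →
        (E - (Yᴴ * X * Z + Zᴴ * Xᴴ * Y)).PosSemidef :=
  stmt16_general E Y Z ζ ς hζ hς hLMI
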